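/- arXiv:1008.1933 — 8 statements merged into one kernel-verified Lean document; each statement's English description precedes it below -/
import Mathlib

section
/- Let V be a real inner product space with an orthogonal complex structure J (J² = −id, ⟨JX,JY⟩ = ⟨X,Y⟩), dim V ≥ 6, and let R : V⁴ → ℝ be a quadrilinear map with the symmetries of a curvature tensor (antisymmetric in the first two and last two arguments, symmetric under exchange of the first and second pairs, satisfying the first Bianchi identity). If R(x,y,z,x) = 0 for every orthonormal triple {x,y,z} with {x,y,z} ⊥ {Jx,Jy,Jz} pairwise antiholomorphic, then K(x,y) = K(x,z) for every such triple, where K(X,Y) = R(X,Y,Y,X). -/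
open scoped RealInnerProductSpace

/-!
Rotating the pair `(y, z)` by `π/4` in its own plane, to `((y - z)/√2, (y + z)/√2)`, keeps
`{x, y, z}` an orthonormal antiholomorphic triple, so the hypothesis also kills
`R(x, (y-z)/√2, (y+z)/√2, x) = (K(x,y) - K(x,z) + R(x,y,z,x) - R(x,z,y,x))/2`,
and the two mixed terms vanish by the hypothesis applied to `(x, y, z)` and `(x, z, y)`.
-/

section

variable {V : Type*} [NormedAddCommGroup V] [InnerProductSpace ℝ V]

theorem real_inner_apply_eq_neg_of_sq_eq_neg {J : V →ₗ[ℝ] V} (hJ2 : ∀ X : V, J (J X) = -X)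
    (hJg : ∀ X Y : V, ⟪J X, J Y⟫ = ⟪X, Y⟫) (a b : V) : ⟪a, J b⟫ = -⟪b, J a⟫ := by
  rw [← hJg a (J b), hJ2, inner_neg_right, real_inner_comm]

theorem real_inner_self_apply_eq_zero_of_sq_eq_neg {J : V →ₗ[ℝ] V}
    (hJ2 : ∀ X : V, J (J X) = -X) (hJg : ∀ X Y : V, ⟪J X, J Y⟫ = ⟪X, Y⟫) (a : V) :
    ⟪a, J a⟫ = 0 := by
  linarith [real_inner_apply_eq_neg_of_sq_eq_neg hJ2 hJg a a]

theorem norm_eq_one_iff_real_inner_self_eq_one {a : V} : ‖a‖ = 1 ↔ ⟪a, a⟫ = 1 := by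
  rw [real_inner_self_eq_norm_sq, pow_eq_one_iff_of_nonneg (norm_nonneg a) two_ne_zero]

structure IsAntiholOrthonormal (J : V →ₗ[ℝ] V) (x y z : V) : Prop where
  norm_x : ‖x‖ = 1
  norm_y : ‖y‖ = 1
  norm_z : ‖z‖ = 1
  inner_xy : ⟪x, y⟫ = 0
  inner_xz : ⟪x, z⟫ = 0
  inner_yz : ⟪y, z⟫ = 0
  inner_x_Jy : ⟪x, J y⟫ = 0
  inner_x_Jz : ⟪x, J z⟫ = 0
  inner_y_Jz : ⟪y, J z⟫ = 0

namespace IsAntiholOrthonormal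

variable {J : V →ₗ[ℝ] V} {x y z : V}

theorem inner_z_Jy (hJ2 : ∀ X : V, J (J X) = -X) (hJg : ∀ X Y : V, ⟪J X, J Y⟫ = ⟪X, Y⟫)
    (t : IsAntiholOrthonormal J x y z) : ⟪z, J y⟫ = 0 := by
  rw [real_inner_apply_eq_neg_of_sq_eq_neg hJ2 hJg, t.inner_y_Jz, neg_zero]

theorem swap (hJ2 : ∀ X : V, J (J X) = -X) (hJg : ∀ X Y : V, ⟪J X, J Y⟫ = ⟪X, Y⟫)
    (t : IsAntiholOrthonormal J x y z) : IsAntiholOrthonormal J x z y where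
  norm_x := t.norm_x
  norm_y := t.norm_z
  norm_z := t.norm_y
  inner_xy := t.inner_xz
  inner_xz := t.inner_xy
  inner_yz := by rw [real_inner_comm]; exact t.inner_yz
  inner_x_Jy := t.inner_x_Jz
  inner_x_Jz := t.inner_x_Jy
  inner_y_Jz := t.inner_z_Jy hJ2 hJg

theorem rotate (hJ2 : ∀ X : V, J (J X) = -X) (hJg : ∀ X Y : V, ⟪J X, J Y⟫ = ⟪X, Y⟫)
    (t : IsAntiholOrthonormal J x y z) {c s : ℝ} (hcs : c ^ 2 + s ^ 2 = 1) :
    IsAntiholOrthonormal J x (c • y - s • z) (s • y + c • z) := by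
  have hyy : ⟪y, y⟫ = 1 := norm_eq_one_iff_real_inner_self_eq_one.1 t.norm_y
  have hzz : ⟪z, z⟫ = 1 := norm_eq_one_iff_real_inner_self_eq_one.1 t.norm_z
  have hzy : ⟪z, y⟫ = 0 := by rw [real_inner_comm]; exact t.inner_yz
  have hzJy := t.inner_z_Jy hJ2 hJg
  have hyJy := real_inner_self_apply_eq_zero_of_sq_eq_neg hJ2 hJg y
  have hzJz := real_inner_self_apply_eq_zero_of_sq_eq_neg hJ2 hJg z
  have hxx : ⟪x, x⟫ = 1 := norm_eq_one_iff_real_inner_self_eq_one.1 t.norm_x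
  constructor <;> (try rw [norm_eq_one_iff_real_inner_self_eq_one]) <;>
  simp only [map_add, map_sub, map_smul, inner_add_left, inner_add_right, inner_sub_left,
    inner_sub_right, real_inner_smul_left, real_inner_smul_right, hyy, hzz, hzy, hzJy, hyJy,
    hzJz, hxx, t.inner_xy, t.inner_xz, t.inner_yz, t.inner_x_Jy, t.inner_x_Jz,
    t.inner_y_Jz] <;>
  first | linear_combination hcs | ring1

end IsAntiholOrthonormal

theorem quadrilinear_apply_rotate (R : V →ₗ[ℝ] V →ₗ[ℝ] V →ₗ[ℝ] V →ₗ[ℝ] ℝ) (x y z : V) (c s : ℝ) :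
    R x (c • y - s • z) (s • y + c • z) x =
      c * s * (R x y y x - R x z z x) + c ^ 2 * R x y z x - s ^ 2 * R x z y x := by
  simp only [map_add, map_sub, map_smul, LinearMap.add_apply, LinearMap.sub_apply,
    LinearMap.smul_apply, smul_eq_mul]
  ring

theorem IsAntiholOrthonormal.apply_self_eq_of_forall_apply_eq_zero {J : V →ₗ[ℝ] V} {x y z : V}
    (hJ2 : ∀ X : V, J (J X) = -X) (hJg : ∀ X Y : V, ⟪J X, J Y⟫ = ⟪X, Y⟫)
    {R : V →ₗ[ℝ] V →ₗ[ℝ] V →ₗ[ℝ] V →ₗ[ℝ] ℝ}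
    (hR : ∀ x y z : V, IsAntiholOrthonormal J x y z → R x y z x = 0)
    (t : IsAntiholOrthonormal J x y z) : R x y y x = R x z z x := by
  set c := √(1 / 2)
  have hc : c ^ 2 = 1 / 2 := Real.sq_sqrt (by norm_num)
  have key := hR _ _ _ (t.rotate hJ2 hJg (c := c) (s := c) (by linarith))
  rw [quadrilinear_apply_rotate, hR _ _ _ t, hR _ _ _ (t.swap hJ2 hJg)] at key
  linear_combination 2 * key - 2 * (R x y y x - R x z z x) * hc
end

theorem antihol_triple_vanish_imp_sec_eq_general
    {V : Type*} [NormedAddCommGroup V] [InnerProductSpace ℝ V]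
    (J : V →ₗ[ℝ] V) (hJ2 : ∀ X : V, J (J X) = -X)
    (hJg : ∀ X Y : V, ⟪J X, J Y⟫ = ⟪X, Y⟫)
    (R : V →ₗ[ℝ] V →ₗ[ℝ] V →ₗ[ℝ] V →ₗ[ℝ] ℝ)
    (h : ∀ x y z : V, ‖x‖ = 1 → ‖y‖ = 1 → ‖z‖ = 1 →
      ⟪x, y⟫ = 0 → ⟪x, z⟫ = 0 → ⟪y, z⟫ = 0 →
      ⟪x, J y⟫ = 0 → ⟪x, J z⟫ = 0 → ⟪y, J z⟫ = 0 →
      R x y z x = 0) :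
    ∀ x y z : V, ‖x‖ = 1 → ‖y‖ = 1 → ‖z‖ = 1 →
      ⟪x, y⟫ = 0 → ⟪x, z⟫ = 0 → ⟪y, z⟫ = 0 →
      ⟪x, J y⟫ = 0 → ⟪x, J z⟫ = 0 → ⟪y, J z⟫ = 0 →
      R x y y x = R x z z x := by
  intro x y z hx hy hz hxy hxz hyz hxJy hxJz hyJz
  refine IsAntiholOrthonormal.apply_self_eq_of_forall_apply_eq_zero hJ2 hJg ?_
    ⟨hx, hy, hz, hxy, hxz, hyz, hxJy, hxJz, hyJz⟩
  exact fun x y z ⟨h1, h2, h3, h4, h5, h6, h7, h8, h9⟩ => h x y z h1 h2 h3 h4 h5 h6 h7 h8 h9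

/-- Lemma 3, a) ⇒ b): if `R(x,y,z,x) = 0` for all orthonormal antiholomorphic triples,
then `K(x,y) = K(x,z)` for all such triples. -/
theorem antihol_triple_vanish_imp_sec_eq
    {V : Type*} [NormedAddCommGroup V] [InnerProductSpace ℝ V]
    (hdim : 6 ≤ Module.finrank ℝ V)
    (J : V →ₗ[ℝ] V) (hJ2 : ∀ X : V, J (J X) = -X)
    (hJg : ∀ X Y : V, ⟪J X, J Y⟫ = ⟪X, Y⟫)
    (R : V →ₗ[ℝ] V →ₗ[ℝ] V →ₗ[ℝ] V →ₗ[ℝ] ℝ)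
    (hR1 : ∀ X Y Z W : V, R X Y Z W = - R Y X Z W)
    (hR2 : ∀ X Y Z W : V, R X Y Z W = - R X Y W Z)
    (hR3 : ∀ X Y Z W : V, R X Y Z W = R Z W X Y)
    (hB : ∀ X Y Z W : V, R X Y Z W + R Y Z X W + R Z X Y W = 0)
    (h : ∀ x y z : V, ‖x‖ = 1 → ‖y‖ = 1 → ‖z‖ = 1 →
      ⟪x, y⟫ = 0 → ⟪x, z⟫ = 0 → ⟪y, z⟫ = 0 →
      ⟪x, J y⟫ = 0 → ⟪x, J z⟫ = 0 → ⟪y, J z⟫ = 0 →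
      R x y z x = 0) :
    ∀ x y z : V, ‖x‖ = 1 → ‖y‖ = 1 → ‖z‖ = 1 →
      ⟪x, y⟫ = 0 → ⟪x, z⟫ = 0 → ⟪y, z⟫ = 0 →
      ⟪x, J y⟫ = 0 → ⟪x, J z⟫ = 0 → ⟪y, J z⟫ = 0 →
      R x y y x = R x z z x :=
  antihol_triple_vanish_imp_sec_eq_general J hJ2 hJg R h
end

section
/- Let V be a real inner product space with an orthogonal complex structure J, dim V ≥ 6, and R a quadrilinear map with curvature tensor symmetries. If K(x,y) = K(x,z) for every orthonormal antiholomorphic triple {x,y,z} (where K(X,Y)=R(X,Y,Y,X)), then R(x,y,z,x) = 0 for every such triple. -/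
open scoped RealInnerProductSpace

/-!
Rotating the pair `(y, z)` of an orthonormal antiholomorphic triple `(x, y, z)` by `π/4`, i.e.
replacing it by `((y + z)/√2, (y - z)/√2)`, gives another such triple. The hypothesis for the new
triple says `R(x, y+z, y+z, x) = R(x, y-z, y-z, x)`, and by polarization of the symmetric form
`(y, z) ↦ R(x, y, z, x)` the difference of the two sides is `4 R(x, y, z, x)`.
-/

section

variable {V : Type*} [NormedAddCommGroup V] [InnerProductSpace ℝ V]

section ComplexStructure

variable (J : V →ₗ[ℝ] V) (hJ2 : ∀ X : V, J (J X) = -X) (hJg : ∀ X Y : V, ⟪J X, J Y⟫ = ⟪X, Y⟫)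
include hJ2 hJg

theorem inner_map_eq_neg_inner_map_of_orthogonal_complex (a b : V) : ⟪a, J b⟫ = -⟪b, J a⟫ := by
  rw [← hJg a (J b), hJ2 b, inner_neg_right, real_inner_comm]

theorem inner_map_self_eq_zero_of_orthogonal_complex (a : V) : ⟪a, J a⟫ = 0 := by
  linarith [inner_map_eq_neg_inner_map_of_orthogonal_complex J hJ2 hJg a a]

end ComplexStructure

structure IsOrthonormalAntiholTriple (J : V →ₗ[ℝ] V) (x y z : V) : Prop where
  norm_x : ‖x‖ = 1
  norm_y : ‖y‖ = 1
  norm_z : ‖z‖ = 1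
  inner_x_y : ⟪x, y⟫ = 0
  inner_x_z : ⟪x, z⟫ = 0
  inner_y_z : ⟪y, z⟫ = 0
  inner_x_J_y : ⟪x, J y⟫ = 0
  inner_x_J_z : ⟪x, J z⟫ = 0
  inner_y_J_z : ⟪y, J z⟫ = 0

theorem norm_inv_sqrt_two_smul_add_of_orthonormal {y z : V} (hy : ‖y‖ = 1) (hz : ‖z‖ = 1)
    (hyz : ⟪y, z⟫ = 0) : ‖(√2)⁻¹ • (y + z)‖ = 1 := by
  rw [norm_smul, (norm_add_eq_sqrt_iff_real_inner_eq_zero).2 hyz, hy, hz, norm_inv,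
    Real.norm_eq_abs, abs_of_pos (by positivity)]
  norm_num

theorem norm_inv_sqrt_two_smul_sub_of_orthonormal {y z : V} (hy : ‖y‖ = 1) (hz : ‖z‖ = 1)
    (hyz : ⟪y, z⟫ = 0) : ‖(√2)⁻¹ • (y - z)‖ = 1 := by
  rw [norm_smul, (norm_sub_eq_sqrt_iff_real_inner_eq_zero).2 hyz, hy, hz, norm_inv,
    Real.norm_eq_abs, abs_of_pos (by positivity)]
  norm_num

theorem IsOrthonormalAntiholTriple.rotate {J : V →ₗ[ℝ] V} (hJ2 : ∀ X : V, J (J X) = -X)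
    (hJg : ∀ X Y : V, ⟪J X, J Y⟫ = ⟪X, Y⟫) {x y z : V} (t : IsOrthonormalAntiholTriple J x y z) :
    IsOrthonormalAntiholTriple J x ((√2)⁻¹ • (y + z)) ((√2)⁻¹ • (y - z)) := by
  have hzJy : ⟪z, J y⟫ = 0 := by
    rw [inner_map_eq_neg_inner_map_of_orthogonal_complex J hJ2 hJg, t.inner_y_J_z, neg_zero]
  have hyy : ⟪y, y⟫ = 1 := by rw [real_inner_self_eq_norm_sq, t.norm_y, one_pow]
  have hzz : ⟪z, z⟫ = 1 := by rw [real_inner_self_eq_norm_sq, t.norm_z, one_pow]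
  refine ⟨t.norm_x, norm_inv_sqrt_two_smul_add_of_orthonormal t.norm_y t.norm_z t.inner_y_z,
    norm_inv_sqrt_two_smul_sub_of_orthonormal t.norm_y t.norm_z t.inner_y_z, ?_, ?_, ?_, ?_, ?_, ?_⟩
  all_goals
    simp only [map_smul, map_add, map_sub, inner_smul_left, inner_smul_right, inner_add_left,
      inner_add_right, inner_sub_right, real_inner_comm y z, hyy, hzz, hzJy,
      t.inner_x_y, t.inner_x_z, t.inner_y_z, t.inner_x_J_y, t.inner_x_J_z, t.inner_y_J_z,
      inner_map_self_eq_zero_of_orthogonal_complex J hJ2 hJg]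
    ring

section CurvatureTensor

variable (R : V →ₗ[ℝ] V →ₗ[ℝ] V →ₗ[ℝ] V →ₗ[ℝ] ℝ)

theorem curvature_apply_comm_of_symmetries (hR1 : ∀ X Y Z W : V, R X Y Z W = - R Y X Z W)
    (hR2 : ∀ X Y Z W : V, R X Y Z W = - R X Y W Z) (hR3 : ∀ X Y Z W : V, R X Y Z W = R Z W X Y)
    (x y z : V) : R x z y x = R x y z x := by
  rw [hR3, hR1, hR2, neg_neg]

theorem curvature_smul_add_sub_smul_sub {x : V} (hcomm : ∀ y z : V, R x z y x = R x y z x)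
    (c : ℝ) (y z : V) :
    R x (c • (y + z)) (c • (y + z)) x - R x (c • (y - z)) (c • (y - z)) x
      = 4 * c ^ 2 * R x y z x := by
  simp only [map_smul, map_add, map_sub, LinearMap.smul_apply, LinearMap.add_apply,
    LinearMap.sub_apply, smul_eq_mul, hcomm y z]
  ring

end CurvatureTensor

end

theorem antihol_triple_sec_eq_imp_vanish_general
    {V : Type*} [NormedAddCommGroup V] [InnerProductSpace ℝ V]
    (J : V →ₗ[ℝ] V) (hJ2 : ∀ X : V, J (J X) = -X)
    (hJg : ∀ X Y : V, ⟪J X, J Y⟫ = ⟪X, Y⟫)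
    (R : V →ₗ[ℝ] V →ₗ[ℝ] V →ₗ[ℝ] V →ₗ[ℝ] ℝ)
    (hR1 : ∀ X Y Z W : V, R X Y Z W = - R Y X Z W)
    (hR2 : ∀ X Y Z W : V, R X Y Z W = - R X Y W Z)
    (hR3 : ∀ X Y Z W : V, R X Y Z W = R Z W X Y)
    (h : ∀ x y z : V, ‖x‖ = 1 → ‖y‖ = 1 → ‖z‖ = 1 →
      ⟪x, y⟫ = 0 → ⟪x, z⟫ = 0 → ⟪y, z⟫ = 0 →
      ⟪x, J y⟫ = 0 → ⟪x, J z⟫ = 0 → ⟪y, J z⟫ = 0 →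
      R x y y x = R x z z x) :
    ∀ x y z : V, ‖x‖ = 1 → ‖y‖ = 1 → ‖z‖ = 1 →
      ⟪x, y⟫ = 0 → ⟪x, z⟫ = 0 → ⟪y, z⟫ = 0 →
      ⟪x, J y⟫ = 0 → ⟪x, J z⟫ = 0 → ⟪y, J z⟫ = 0 →
      R x y z x = 0 := by
  intro x y z hx hy hz hxy hxz hyz hxJy hxJz hyJz
  have t : IsOrthonormalAntiholTriple J x ((√2)⁻¹ • (y + z)) ((√2)⁻¹ • (y - z)) :=
    IsOrthonormalAntiholTriple.rotate hJ2 hJg ⟨hx, hy, hz, hxy, hxz, hyz, hxJy, hxJz, hyJz⟩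
  have hrot := h _ _ _ t.norm_x t.norm_y t.norm_z t.inner_x_y t.inner_x_z t.inner_y_z
    t.inner_x_J_y t.inner_x_J_z t.inner_y_J_z
  have hpol := curvature_smul_add_sub_smul_sub R
    (curvature_apply_comm_of_symmetries R hR1 hR2 hR3 x) (√2)⁻¹ y z
  rw [hrot, sub_self, inv_pow, Real.sq_sqrt zero_le_two] at hpol
  linarith

/-- Lemma 3, b) ⇒ a): if `K(x,y) = K(x,z)` for all orthonormal antiholomorphic triples,
then `R(x,y,z,x) = 0` for all such triples. -/
theorem antihol_triple_sec_eq_imp_vanish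
    {V : Type*} [NormedAddCommGroup V] [InnerProductSpace ℝ V]
    (hdim : 6 ≤ Module.finrank ℝ V)
    (J : V →ₗ[ℝ] V) (hJ2 : ∀ X : V, J (J X) = -X)
    (hJg : ∀ X Y : V, ⟪J X, J Y⟫ = ⟪X, Y⟫)
    (R : V →ₗ[ℝ] V →ₗ[ℝ] V →ₗ[ℝ] V →ₗ[ℝ] ℝ)
    (hR1 : ∀ X Y Z W : V, R X Y Z W = - R Y X Z W)
    (hR2 : ∀ X Y Z W : V, R X Y Z W = - R X Y W Z)
    (hR3 : ∀ X Y Z W : V, R X Y Z W = R Z W X Y)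
    (hB : ∀ X Y Z W : V, R X Y Z W + R Y Z X W + R Z X Y W = 0)
    (h : ∀ x y z : V, ‖x‖ = 1 → ‖y‖ = 1 → ‖z‖ = 1 →
      ⟪x, y⟫ = 0 → ⟪x, z⟫ = 0 → ⟪y, z⟫ = 0 →
      ⟪x, J y⟫ = 0 → ⟪x, J z⟫ = 0 → ⟪y, J z⟫ = 0 →
      R x y y x = R x z z x) :
    ∀ x y z : V, ‖x‖ = 1 → ‖y‖ = 1 → ‖z‖ = 1 →
      ⟪x, y⟫ = 0 → ⟪x, z⟫ = 0 → ⟪y, z⟫ = 0 →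
      ⟪x, J y⟫ = 0 → ⟪x, J z⟫ = 0 → ⟪y, J z⟫ = 0 →
      R x y z x = 0 :=
  antihol_triple_sec_eq_imp_vanish_general J hJ2 hJg R hR1 hR2 hR3 h
end

section
/- Let V be a real inner product space of dimension 2m ≥ 6 with orthogonal complex structure J, and R a curvature-type tensor on V. Suppose K(x,y) = K(x,z) for every orthonormal antiholomorphic triple {x,y,z}, and additionally R(x,y,Jy,x)=0 for all antiholomorphic orthonormal pairs. Then R has pointwise constant antiholomorphic sectional curvature: there is a constant c such that K(X,Y) = c for every orthonormal pair {X,Y} with span{X,Y} antiholomorphic (i.e. ⟨X,JY⟩ = 0). -/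
/-!
Fix a unit vector `x` and consider the symmetric form `B(u, v) = R(x, u, v, x)` on the
`J`-invariant subspace `{x, J x}ᗮ`. The hypothesis says `B(y, y) = B(z, z)` whenever `y, z` are
unit vectors there spanning an antiholomorphic plane. Applied to `(y ± z)/√2` it kills the mixed
term `B(y, z)`; comparing `y` and `J y` with a third vector orthogonal to both gives
`B(J y, J y) = B(y, y)`. Splitting an arbitrary `z ⊥ y` as `t J y + z'` with `z'` antiholomorphic
to `y` then shows `B(z, z) = B(y, y)` for all unit `y ⊥ z`, and a vector orthogonal to two given
ones joins any two of them. Finally `K(X, Y) = K(X, w) = K(w, X') = K(X', Y')` for a unit `w`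
orthogonal to `X, J X, X', J X'`; all auxiliary vectors exist because `dim V > 4`.
-/

open scoped RealInnerProductSpace
open Module

theorem exists_norm_eq_one_forall_inner_eq_zero {V : Type*} [NormedAddCommGroup V]
    [InnerProductSpace ℝ V] [FiniteDimensional ℝ V] {n : ℕ} (v : Fin n → V)
    (hn : n < finrank ℝ V) : ∃ w : V, ‖w‖ = 1 ∧ ∀ i, ⟪v i, w⟫ = 0 := by
  set S := Submodule.span ℝ (Set.range v)
  have hS : finrank ℝ S ≤ n := by
    simpa only [Set.finrank, Fintype.card_fin] using finrank_range_le_card (R := ℝ) v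
  have hne : Sᗮ ≠ ⊥ := by
    intro h
    have := S.finrank_add_finrank_orthogonal
    rw [h, finrank_bot] at this
    omega
  obtain ⟨w, hwS, hw⟩ := (Submodule.ne_bot_iff _).mp hne
  refine ⟨‖w‖⁻¹ • w, norm_smul_inv_norm hw, fun i => ?_⟩
  rw [real_inner_smul_right,
    S.inner_right_of_mem_orthogonal (Submodule.subset_span ⟨i, rfl⟩) hwS, mul_zero]

section ComplexStructure

variable {V : Type*} [NormedAddCommGroup V] [InnerProductSpace ℝ V]

structure IsOrthogonalComplexStructure (J : V →ₗ[ℝ] V) : Prop where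
  apply_apply : ∀ x, J (J x) = -x
  inner_map_map : ∀ x y, ⟪J x, J y⟫ = ⟪x, y⟫

/-- The subspace `{x, J x}ᗮ`: `y` lies in it iff `y ⊥ x` and `span {x, y}` is antiholomorphic. -/
noncomputable def antiholOrthogonal (J : V →ₗ[ℝ] V) (x : V) : Submodule ℝ V :=
  LinearMap.ker (innerₛₗ ℝ x) ⊓ LinearMap.ker (innerₛₗ ℝ x ∘ₗ J)

variable {J : V →ₗ[ℝ] V}

theorem mem_antiholOrthogonal {x y : V} :
    y ∈ antiholOrthogonal J x ↔ ⟪x, y⟫ = 0 ∧ ⟪x, J y⟫ = 0 := by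
  simp [antiholOrthogonal]

theorem antiholOrthogonal_le_smul (x : V) (c : ℝ) :
    antiholOrthogonal J x ≤ antiholOrthogonal J (c • x) := fun y h => by
  rw [mem_antiholOrthogonal] at h ⊢
  simp [real_inner_smul_left, h.1, h.2]

namespace IsOrthogonalComplexStructure

theorem inner_map_right (hJ : IsOrthogonalComplexStructure J) (x y : V) :
    ⟪x, J y⟫ = -⟪J x, y⟫ := by
  rw [← hJ.inner_map_map x (J y), hJ.apply_apply, inner_neg_right]

theorem inner_self_map (hJ : IsOrthogonalComplexStructure J) (x : V) : ⟪x, J x⟫ = 0 := by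
  have h := hJ.inner_map_right x x
  rw [real_inner_comm x (J x)] at h
  linarith

theorem norm_map (hJ : IsOrthogonalComplexStructure J) (x : V) : ‖J x‖ = ‖x‖ := by
  rw [norm_eq_sqrt_real_inner, norm_eq_sqrt_real_inner, hJ.inner_map_map]

theorem mem_antiholOrthogonal_iff (hJ : IsOrthogonalComplexStructure J) {x y : V} :
    y ∈ antiholOrthogonal J x ↔ ⟪x, y⟫ = 0 ∧ ⟪J x, y⟫ = 0 := by
  rw [mem_antiholOrthogonal, hJ.inner_map_right, neg_eq_zero]

theorem mem_antiholOrthogonal_comm (hJ : IsOrthogonalComplexStructure J) {x y : V} :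
    y ∈ antiholOrthogonal J x ↔ x ∈ antiholOrthogonal J y := by
  rw [hJ.mem_antiholOrthogonal_iff, mem_antiholOrthogonal, real_inner_comm, real_inner_comm y (J x)]

theorem map_mem_antiholOrthogonal (hJ : IsOrthogonalComplexStructure J) {x y : V}
    (h : y ∈ antiholOrthogonal J x) : J y ∈ antiholOrthogonal J x := by
  rw [mem_antiholOrthogonal] at h ⊢
  rw [hJ.apply_apply, inner_neg_right, h.1, neg_zero]
  exact ⟨h.2, rfl⟩

theorem antiholOrthogonal_map (hJ : IsOrthogonalComplexStructure J) (x : V) :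
    antiholOrthogonal J (J x) = antiholOrthogonal J x := by
  ext y
  rw [mem_antiholOrthogonal, hJ.mem_antiholOrthogonal_iff, hJ.inner_map_map, and_comm]

theorem exists_norm_eq_one_mem_antiholOrthogonal (hJ : IsOrthogonalComplexStructure J)
    [FiniteDimensional ℝ V] (hV : 4 < finrank ℝ V) (x a b : V) :
    ∃ w : V, ‖w‖ = 1 ∧ w ∈ antiholOrthogonal J x ∧ ⟪a, w⟫ = 0 ∧ ⟪b, w⟫ = 0 := by
  obtain ⟨w, hw, hv⟩ := exists_norm_eq_one_forall_inner_eq_zero ![x, J x, a, b] hV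
  exact ⟨w, hw, hJ.mem_antiholOrthogonal_iff.2 ⟨hv 0, hv 1⟩, hv 2, hv 3⟩

end IsOrthogonalComplexStructure

theorem LinearMap.BilinForm.apply_smul_add_smul_self {B : LinearMap.BilinForm ℝ V}
    (hB : ∀ u v, B u v = B v u) (s t : ℝ) (u v : V) :
    B (s • u + t • v) (s • u + t • v) = s ^ 2 * B u u + 2 * s * t * B u v + t ^ 2 * B v v := by
  simp only [map_add, map_smul, LinearMap.add_apply, LinearMap.smul_apply, smul_eq_mul, hB v u]
  ring

section BilinForm

variable {B : LinearMap.BilinForm ℝ V} {x : V}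

theorem bilin_mul_norm_sq_eq_of_antihol_pair
    (hconst : ∀ y z, ‖y‖ = 1 → ‖z‖ = 1 → y ∈ antiholOrthogonal J x →
      z ∈ antiholOrthogonal J x → z ∈ antiholOrthogonal J y → B y y = B z z)
    {y z : V} (hy : y ∈ antiholOrthogonal J x) (hz : z ∈ antiholOrthogonal J x)
    (hyz : z ∈ antiholOrthogonal J y) : B y y * ‖z‖ ^ 2 = B z z * ‖y‖ ^ 2 := by
  rcases eq_or_ne y 0 with rfl | hy0
  · simp
  rcases eq_or_ne z 0 with rfl | hz0
  · simp
  have h := hconst _ _ (norm_smul_inv_norm (𝕜 := ℝ) hy0) (norm_smul_inv_norm (𝕜 := ℝ) hz0)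
    (Submodule.smul_mem _ _ hy) (Submodule.smul_mem _ _ hz)
    (antiholOrthogonal_le_smul _ _ (Submodule.smul_mem _ _ hyz))
  simp only [map_smul, LinearMap.smul_apply, smul_eq_mul] at h
  have hy' : ‖y‖ ≠ 0 := norm_ne_zero_iff.2 hy0
  have hz' : ‖z‖ ≠ 0 := norm_ne_zero_iff.2 hz0
  field_simp at h
  linear_combination h

theorem bilin_eq_zero_of_antihol_pair (hJ : IsOrthogonalComplexStructure J)
    (hB : ∀ u v, B u v = B v u)
    (hconst : ∀ y z, ‖y‖ = 1 → ‖z‖ = 1 → y ∈ antiholOrthogonal J x →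
      z ∈ antiholOrthogonal J x → z ∈ antiholOrthogonal J y → B y y = B z z)
    {y z : V} (hy : y ∈ antiholOrthogonal J x) (hz : z ∈ antiholOrthogonal J x)
    (hyz : z ∈ antiholOrthogonal J y) : B y z = 0 := by
  rcases eq_or_ne y 0 with rfl | hy0
  · simp
  rcases eq_or_ne z 0 with rfl | hz0
  · simp
  obtain ⟨hyz₁, hyz₂⟩ := mem_antiholOrthogonal.1 hyz
  obtain ⟨hzy₁, hzy₂⟩ := mem_antiholOrthogonal.1 (hJ.mem_antiholOrthogonal_comm.1 hyz)
  -- `y` and `z` are rescaled to the same length so that `a = ‖z‖ y + ‖y‖ z` and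
  -- `b = ‖z‖ y - ‖y‖ z` are again an antiholomorphic pair.
  have hinner : ∀ c d : ℝ, ⟪‖z‖ • y + c • z, ‖z‖ • y + d • z⟫ = ‖z‖ ^ 2 * (‖y‖ ^ 2 + c * d) := by
    intro c d
    simp only [inner_add_left, inner_add_right, real_inner_smul_left, real_inner_smul_right,
      hyz₁, hzy₁]
    rw [real_inner_self_eq_norm_sq, real_inner_self_eq_norm_sq]
    ring
  have hab : ‖z‖ • y + (-‖y‖) • z ∈ antiholOrthogonal J (‖z‖ • y + ‖y‖ • z) := by
    refine mem_antiholOrthogonal.2 ⟨by rw [hinner]; ring, ?_⟩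
    simp only [map_add, map_smul, inner_add_left, inner_add_right, real_inner_smul_left,
      real_inner_smul_right, hJ.inner_self_map, hyz₂, hzy₂]
    ring
  have h := bilin_mul_norm_sq_eq_of_antihol_pair hconst
    (add_mem (Submodule.smul_mem _ _ hy) (Submodule.smul_mem _ _ hz))
    (add_mem (Submodule.smul_mem _ _ hy) (Submodule.smul_mem _ _ hz)) hab
  rw [← real_inner_self_eq_norm_sq, ← real_inner_self_eq_norm_sq, hinner, hinner,
    B.apply_smul_add_smul_self hB, B.apply_smul_add_smul_self hB] at h
  have hr : ‖y‖ ≠ 0 := norm_ne_zero_iff.2 hy0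
  have hs : ‖z‖ ≠ 0 := norm_ne_zero_iff.2 hz0
  have : 8 * ‖y‖ ^ 3 * ‖z‖ ^ 3 * B y z = 0 := by linear_combination h
  simpa [hr, hs] using this

variable [FiniteDimensional ℝ V]

theorem bilin_map_map_eq (hJ : IsOrthogonalComplexStructure J) (hV : 4 < finrank ℝ V)
    (hconst : ∀ y z, ‖y‖ = 1 → ‖z‖ = 1 → y ∈ antiholOrthogonal J x →
      z ∈ antiholOrthogonal J x → z ∈ antiholOrthogonal J y → B y y = B z z)
    {y : V} (hy : y ∈ antiholOrthogonal J x) : B (J y) (J y) = B y y := by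
  obtain ⟨w, hw, hwx, hyw, hJyw⟩ := hJ.exists_norm_eq_one_mem_antiholOrthogonal hV x y (J y)
  have hwy : w ∈ antiholOrthogonal J y := hJ.mem_antiholOrthogonal_iff.2 ⟨hyw, hJyw⟩
  have h₁ := bilin_mul_norm_sq_eq_of_antihol_pair hconst hy hwx hwy
  have h₂ := bilin_mul_norm_sq_eq_of_antihol_pair hconst (hJ.map_mem_antiholOrthogonal hy) hwx
    (by rwa [hJ.antiholOrthogonal_map])
  rw [hw, hJ.norm_map] at h₂
  rw [hw] at h₁
  linarith

theorem bilin_self_eq_mul_norm_sq_of_inner_eq_zero (hJ : IsOrthogonalComplexStructure J)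
    (hB : ∀ u v, B u v = B v u) (hV : 4 < finrank ℝ V)
    (hconst : ∀ y z, ‖y‖ = 1 → ‖z‖ = 1 → y ∈ antiholOrthogonal J x →
      z ∈ antiholOrthogonal J x → z ∈ antiholOrthogonal J y → B y y = B z z)
    {y z : V} (hy : y ∈ antiholOrthogonal J x) (hz : z ∈ antiholOrthogonal J x)
    (hy₁ : ‖y‖ = 1) (hyz : ⟪y, z⟫ = 0) : B z z = B y y * ‖z‖ ^ 2 := by
  -- Split off the `J y`-component of `z`; the rest is antiholomorphic to `y`.
  set t := ⟪J y, z⟫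
  set z' := z - t • J y
  have hJy := hJ.map_mem_antiholOrthogonal hy
  have hz'x : z' ∈ antiholOrthogonal J x := sub_mem hz (Submodule.smul_mem _ t hJy)
  have hz'y : z' ∈ antiholOrthogonal J (J y) := by
    refine mem_antiholOrthogonal.2 ⟨?_, ?_⟩
    · rw [inner_sub_right, real_inner_smul_right, real_inner_self_eq_norm_sq, hJ.norm_map, hy₁]
      ring
    · rw [map_sub, map_smul, inner_sub_right, real_inner_smul_right, hJ.inner_map_map,
        hJ.inner_map_map, hJ.inner_self_map, hyz]
      ring
  have hcross := bilin_eq_zero_of_antihol_pair hJ hB hconst hJy hz'x hz'y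
  have hz' := bilin_mul_norm_sq_eq_of_antihol_pair hconst hJy hz'x hz'y
  rw [hJ.norm_map, hy₁, bilin_map_map_eq hJ hV hconst hy] at hz'
  have hdecomp : z = t • J y + (1 : ℝ) • z' := by simp [z']
  have hnorm : ‖z‖ ^ 2 = t ^ 2 + ‖z'‖ ^ 2 := by
    have h := norm_add_sq_eq_norm_sq_add_norm_sq_real (x := t • J y) (y := z')
      (by rw [real_inner_smul_left, (mem_antiholOrthogonal.1 hz'y).1, mul_zero])
    rw [add_sub_cancel, norm_smul, hJ.norm_map, hy₁, Real.norm_eq_abs] at h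
    nlinarith [sq_abs t]
  rw [hnorm, hdecomp, B.apply_smul_add_smul_self hB, hcross, bilin_map_map_eq hJ hV hconst hy]
  linear_combination -hz'

theorem bilin_mul_norm_sq_eq (hJ : IsOrthogonalComplexStructure J)
    (hB : ∀ u v, B u v = B v u) (hV : 4 < finrank ℝ V)
    (hconst : ∀ y z, ‖y‖ = 1 → ‖z‖ = 1 → y ∈ antiholOrthogonal J x →
      z ∈ antiholOrthogonal J x → z ∈ antiholOrthogonal J y → B y y = B z z)
    {y z : V} (hy : y ∈ antiholOrthogonal J x) (hz : z ∈ antiholOrthogonal J x) :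
    B y y * ‖z‖ ^ 2 = B z z * ‖y‖ ^ 2 := by
  obtain ⟨w, hw, hwx, hyw, hzw⟩ := hJ.exists_norm_eq_one_mem_antiholOrthogonal hV x y z
  rw [bilin_self_eq_mul_norm_sq_of_inner_eq_zero hJ hB hV hconst hwx hy hw
      (by rwa [real_inner_comm]),
    bilin_self_eq_mul_norm_sq_of_inner_eq_zero hJ hB hV hconst hwx hz hw
      (by rwa [real_inner_comm])]
  ring

end BilinForm

theorem curvature_eq_of_antihol_pairs [FiniteDimensional ℝ V]
    (hJ : IsOrthogonalComplexStructure J) (hV : 4 < finrank ℝ V)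
    (R : V →ₗ[ℝ] V →ₗ[ℝ] V →ₗ[ℝ] V →ₗ[ℝ] ℝ)
    (hR1 : ∀ X Y Z W : V, R X Y Z W = - R Y X Z W)
    (hR2 : ∀ X Y Z W : V, R X Y Z W = - R X Y W Z)
    (hR3 : ∀ X Y Z W : V, R X Y Z W = R Z W X Y)
    (htriple : ∀ x y z : V, ‖x‖ = 1 → ‖y‖ = 1 → ‖z‖ = 1 → y ∈ antiholOrthogonal J x →
      z ∈ antiholOrthogonal J x → z ∈ antiholOrthogonal J y → R x y y x = R x z z x)
    {X Y X' Y' : V} (hX : ‖X‖ = 1) (hY : ‖Y‖ = 1) (hX' : ‖X'‖ = 1) (hY' : ‖Y'‖ = 1)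
    (hXY : Y ∈ antiholOrthogonal J X) (hXY' : Y' ∈ antiholOrthogonal J X') :
    R X Y Y X = R X' Y' Y' X' := by
  have hpointwise : ∀ x y z : V, ‖x‖ = 1 → ‖y‖ = 1 → ‖z‖ = 1 → y ∈ antiholOrthogonal J x →
      z ∈ antiholOrthogonal J x → R x y y x = R x z z x := by
    intro x y z hx hy hz hyx hzx
    have hsymm : ∀ u v, R x u v x = R x v u x := fun u v => by
      linarith [hR3 x v u x, hR1 u x x v, hR2 x u x v]
    simpa [hy, hz] using bilin_mul_norm_sq_eq (B := (R x).compr₂ (LinearMap.applyₗ x)) hJ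
      hsymm hV (fun y z => htriple x y z hx) hyx hzx
  obtain ⟨w, hw, hwX, hX'w, hJX'w⟩ := hJ.exists_norm_eq_one_mem_antiholOrthogonal hV X X' (J X')
  have hwX' : w ∈ antiholOrthogonal J X' := hJ.mem_antiholOrthogonal_iff.2 ⟨hX'w, hJX'w⟩
  calc R X Y Y X = R X w w X := hpointwise X Y w hX hY hw hXY hwX
    _ = R w X X w := hR3 X w w X
    _ = R w X' X' w := hpointwise w X X' hw hX hX'
        (hJ.mem_antiholOrthogonal_comm.1 hwX) (hJ.mem_antiholOrthogonal_comm.1 hwX')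
    _ = R X' w w X' := hR3 w X' X' w
    _ = R X' Y' Y' X' := hpointwise X' w Y' hX' hw hY' hwX' hXY'

end ComplexStructure

theorem constant_antiholomorphic_sectional_curvature_general
    {V : Type*} [NormedAddCommGroup V] [InnerProductSpace ℝ V]
    (m : ℕ) (hm : Module.finrank ℝ V = 2 * m) (hm3 : 3 ≤ m)
    (J : V →ₗ[ℝ] V) (hJ2 : ∀ X : V, J (J X) = -X)
    (hJg : ∀ X Y : V, ⟪J X, J Y⟫ = ⟪X, Y⟫)
    (R : V →ₗ[ℝ] V →ₗ[ℝ] V →ₗ[ℝ] V →ₗ[ℝ] ℝ)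
    (hR1 : ∀ X Y Z W : V, R X Y Z W = - R Y X Z W)
    (hR2 : ∀ X Y Z W : V, R X Y Z W = - R X Y W Z)
    (hR3 : ∀ X Y Z W : V, R X Y Z W = R Z W X Y)
    (htriple : ∀ x y z : V, ‖x‖ = 1 → ‖y‖ = 1 → ‖z‖ = 1 →
      ⟪x, y⟫ = 0 → ⟪x, z⟫ = 0 → ⟪y, z⟫ = 0 →
      ⟪x, J y⟫ = 0 → ⟪x, J z⟫ = 0 → ⟪y, J z⟫ = 0 →
      R x y y x = R x z z x) :
    ∃ c : ℝ, ∀ X Y : V, ‖X‖ = 1 → ‖Y‖ = 1 → ⟪X, Y⟫ = 0 → ⟪X, J Y⟫ = 0 →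
      R X Y Y X = c := by
  have : FiniteDimensional ℝ V := .of_finrank_pos (by omega)
  have hV : 4 < finrank ℝ V := by omega
  have hJ : IsOrthogonalComplexStructure J := ⟨hJ2, hJg⟩
  obtain ⟨x₀, hx₀, -⟩ := hJ.exists_norm_eq_one_mem_antiholOrthogonal hV 0 0 0
  obtain ⟨y₀, hy₀, hy₀x₀, -⟩ := hJ.exists_norm_eq_one_mem_antiholOrthogonal hV x₀ 0 0
  refine ⟨R x₀ y₀ y₀ x₀, fun X Y hX hY hXY hXJY => curvature_eq_of_antihol_pairs hJ hV R
    hR1 hR2 hR3 ?_ hX hY hx₀ hy₀ (mem_antiholOrthogonal.2 ⟨hXY, hXJY⟩) hy₀x₀⟩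
  intro x y z hx hy hz hyx hzx hzy
  rw [mem_antiholOrthogonal] at hyx hzx hzy
  exact htriple x y z hx hy hz hyx.1 hzx.1 hzy.1 hyx.2 hzx.2 hzy.2

/-- If `K(x,y) = K(x,z)` for every orthonormal antiholomorphic triple and
`R(x,y,Jy,x) = 0` for every orthonormal antiholomorphic pair, then the
antiholomorphic sectional curvature is (pointwise) constant. -/
theorem constant_antiholomorphic_sectional_curvature
    {V : Type*} [NormedAddCommGroup V] [InnerProductSpace ℝ V]
    (m : ℕ) (hm : Module.finrank ℝ V = 2 * m) (hm3 : 3 ≤ m)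
    (J : V →ₗ[ℝ] V) (hJ2 : ∀ X : V, J (J X) = -X)
    (hJg : ∀ X Y : V, ⟪J X, J Y⟫ = ⟪X, Y⟫)
    (R : V →ₗ[ℝ] V →ₗ[ℝ] V →ₗ[ℝ] V →ₗ[ℝ] ℝ)
    (hR1 : ∀ X Y Z W : V, R X Y Z W = - R Y X Z W)
    (hR2 : ∀ X Y Z W : V, R X Y Z W = - R X Y W Z)
    (hR3 : ∀ X Y Z W : V, R X Y Z W = R Z W X Y)
    (hB : ∀ X Y Z W : V, R X Y Z W + R Y Z X W + R Z X Y W = 0)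
    (htriple : ∀ x y z : V, ‖x‖ = 1 → ‖y‖ = 1 → ‖z‖ = 1 →
      ⟪x, y⟫ = 0 → ⟪x, z⟫ = 0 → ⟪y, z⟫ = 0 →
      ⟪x, J y⟫ = 0 → ⟪x, J z⟫ = 0 → ⟪y, J z⟫ = 0 →
      R x y y x = R x z z x)
    (hpair : ∀ x y : V, ‖x‖ = 1 → ‖y‖ = 1 → ⟪x, y⟫ = 0 → ⟪x, J y⟫ = 0 →
      R x y (J y) x = 0) :
    ∃ c : ℝ, ∀ X Y : V, ‖X‖ = 1 → ‖Y‖ = 1 → ⟪X, Y⟫ = 0 → ⟪X, J Y⟫ = 0 →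
      R X Y Y X = c :=
  constant_antiholomorphic_sectional_curvature_general m hm hm3 J hJ2 hJg R hR1 hR2 hR3 htriple
end

section
/- Let V be a real inner product space with orthogonal complex structure J and R a curvature-type tensor. Let H(X) = R(X,JX,JX,X) denote the holomorphic sectional curvature of a unit vector X. Suppose for every orthonormal antiholomorphic pair {x,y} (unit, orthogonal, with x ⊥ Jy) we have R(x,Jx,Jx,y) + R(x,Jx,Jy,x) = 0. Then for every such pair, H(x) = H(y). -/
open scoped RealInnerProductSpace

/-!
Write `F(u, v) = R(u,Ju,Ju,v) + R(u,Ju,Jv,u)`. If `{x, y}` is an orthonormal antiholomorphic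
pair, so is `{(x + y)/√2, (y - x)/√2}`; as `F` is quartic, it therefore vanishes at
`(x + y, y - x)`, and expanding with the symmetries of `R` gives
`F(x + y, y - x) = 2 (F(y, x) - F(x, y)) + 2 (H(y) - H(x))`.
The two `F` terms on the right vanish as well, so `H(x) = H(y)`.
-/

section Algebraic

variable {V : Type*} [AddCommGroup V] [Module ℝ V]

def antiholForm (J : V →ₗ[ℝ] V) (R : V →ₗ[ℝ] V →ₗ[ℝ] V →ₗ[ℝ] V →ₗ[ℝ] ℝ) (u v : V) : ℝ :=
  R u (J u) (J u) v + R u (J u) (J v) u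

theorem antiholForm_smul (J : V →ₗ[ℝ] V) (R : V →ₗ[ℝ] V →ₗ[ℝ] V →ₗ[ℝ] V →ₗ[ℝ] ℝ)
    (c : ℝ) (u v : V) :
    antiholForm J R (c • u) (c • v) = c ^ 4 * antiholForm J R u v := by
  simp only [antiholForm, map_smul, LinearMap.smul_apply, smul_eq_mul]
  ring

theorem antiholForm_add_sub (J : V →ₗ[ℝ] V) (R : V →ₗ[ℝ] V →ₗ[ℝ] V →ₗ[ℝ] V →ₗ[ℝ] ℝ)
    (hR1 : ∀ X Y Z W : V, R X Y Z W = - R Y X Z W)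
    (hR2 : ∀ X Y Z W : V, R X Y Z W = - R X Y W Z)
    (hR3 : ∀ X Y Z W : V, R X Y Z W = R Z W X Y) (x y : V) :
    antiholForm J R (x + y) (y - x) =
      2 * (antiholForm J R y x - antiholForm J R x y) +
        2 * (R y (J y) (J y) y - R x (J x) (J x) x) := by
  simp only [antiholForm, map_add, map_sub, LinearMap.add_apply, LinearMap.sub_apply]
  linear_combination (2 : ℝ) *
    (hR2 x (J x) x (J y) - hR3 x (J x) x (J y) + hR2 x (J x) (J x) y
      - hR1 x (J x) y (J x) - hR1 x (J x) y (J y) + hR2 x (J x) y (J y)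
      - hR2 x (J y) x (J x) + hR2 x (J y) y (J y) - hR3 x (J y) y (J y)
      + hR3 (J x) x y (J x) + hR3 (J x) x y (J y)
      - hR2 (J x) y y (J y) + hR3 (J x) y y (J y)
      + hR1 (J x) y (J y) y - hR2 y (J y) x (J y))

end Algebraic

section ComplexStructure

variable {V : Type*} [NormedAddCommGroup V] [InnerProductSpace ℝ V]

theorem inner_apply_swap_eq_neg (J : V →ₗ[ℝ] V)
    (hJ2 : ∀ X : V, J (J X) = -X) (hJg : ∀ X Y : V, ⟪J X, J Y⟫ = ⟪X, Y⟫) (u v : V) :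
    ⟪u, J v⟫ = -⟪v, J u⟫ := by
  rw [← hJg u (J v), hJ2, inner_neg_right, real_inner_comm]

theorem inner_apply_self_eq_zero (J : V →ₗ[ℝ] V)
    (hJ2 : ∀ X : V, J (J X) = -X) (hJg : ∀ X Y : V, ⟪J X, J Y⟫ = ⟪X, Y⟫) (u : V) :
    ⟪u, J u⟫ = 0 := by
  have h := inner_apply_swap_eq_neg J hJ2 hJg u u
  linarith

theorem antiholForm_eq_zero_of_norm_eq (J : V →ₗ[ℝ] V)
    (R : V →ₗ[ℝ] V →ₗ[ℝ] V →ₗ[ℝ] V →ₗ[ℝ] ℝ)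
    (h : ∀ x y : V, ‖x‖ = 1 → ‖y‖ = 1 → ⟪x, y⟫ = 0 → ⟪x, J y⟫ = 0 → antiholForm J R x y = 0)
    {u v : V} (huv : ‖u‖ = ‖v‖) (horth : ⟪u, v⟫ = 0) (horthJ : ⟪u, J v⟫ = 0) :
    antiholForm J R u v = 0 := by
  rcases eq_or_ne u 0 with rfl | hu
  · simp [antiholForm]
  set c := ‖u‖⁻¹
  have hc : c ≠ 0 := inv_ne_zero (norm_ne_zero_iff.mpr hu)
  have hunit : ∀ w : V, ‖w‖ = ‖u‖ → ‖c • w‖ = 1 := fun w hw => by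
    rw [norm_smul, norm_inv, norm_norm, hw, inv_mul_cancel₀ (norm_ne_zero_iff.mpr hu)]
  have hscaled := h (c • u) (c • v) (hunit u rfl) (hunit v huv.symm)
    (by rw [inner_smul_left, inner_smul_right, horth, mul_zero, mul_zero])
    (by rw [map_smul, inner_smul_left, inner_smul_right, horthJ, mul_zero, mul_zero])
  rw [antiholForm_smul] at hscaled
  exact (mul_eq_zero.mp hscaled).resolve_left (pow_ne_zero 4 hc)

end ComplexStructure

theorem holomorphic_sectional_curvature_eq_of_antihol_identity_general
    {V : Type*} [NormedAddCommGroup V] [InnerProductSpace ℝ V]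
    (J : V →ₗ[ℝ] V) (hJ2 : ∀ X : V, J (J X) = -X)
    (hJg : ∀ X Y : V, ⟪J X, J Y⟫ = ⟪X, Y⟫)
    (R : V →ₗ[ℝ] V →ₗ[ℝ] V →ₗ[ℝ] V →ₗ[ℝ] ℝ)
    (hR1 : ∀ X Y Z W : V, R X Y Z W = - R Y X Z W)
    (hR2 : ∀ X Y Z W : V, R X Y Z W = - R X Y W Z)
    (hR3 : ∀ X Y Z W : V, R X Y Z W = R Z W X Y)
    (h : ∀ x y : V, ‖x‖ = 1 → ‖y‖ = 1 → ⟪x, y⟫ = 0 → ⟪x, J y⟫ = 0 →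
      R x (J x) (J x) y + R x (J x) (J y) x = 0) :
    ∀ x y : V, ‖x‖ = 1 → ‖y‖ = 1 → ⟪x, y⟫ = 0 → ⟪x, J y⟫ = 0 →
      R x (J x) (J x) x = R y (J y) (J y) y := by
  intro x y hx hy hxy hxJy
  have hJskew := inner_apply_swap_eq_neg J hJ2 hJg
  have hJself := inner_apply_self_eq_zero J hJ2 hJg
  have hyx : ⟪y, x⟫ = 0 := by rw [real_inner_comm, hxy]
  have hyJx : ⟪y, J x⟫ = 0 := by rw [hJskew, hxJy, neg_zero]
  have hF_xy : antiholForm J R x y = 0 := h x y hx hy hxy hxJy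
  have hF_yx : antiholForm J R y x = 0 := h y x hy hx hyx hyJx
  have hF_sum : antiholForm J R (x + y) (y - x) = 0 := by
    refine antiholForm_eq_zero_of_norm_eq J R h ?_ ?_ ?_
    · rw [← sq_eq_sq₀ (norm_nonneg _) (norm_nonneg _), norm_add_sq_real, norm_sub_sq_real,
        hxy, hyx]
      ring
    · rw [inner_add_left, inner_sub_right, inner_sub_right, real_inner_self_eq_norm_sq,
        real_inner_self_eq_norm_sq, hx, hy, hxy, hyx]
      ring
    · rw [map_sub, inner_add_left, inner_sub_right, inner_sub_right, hJself, hJself, hxJy, hyJx]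
      ring
  rw [antiholForm_add_sub J R hR1 hR2 hR3, hF_xy, hF_yx] at hF_sum
  linarith

/-- Lemma 2 (key step): if `R(x,Jx,Jx,y) + R(x,Jx,Jy,x) = 0` for every orthonormal
antiholomorphic pair, then `H(x) = H(y)` for every such pair,
where `H(X) = R(X,JX,JX,X)`. -/
theorem holomorphic_sectional_curvature_eq_of_antihol_identity
    {V : Type*} [NormedAddCommGroup V] [InnerProductSpace ℝ V]
    (J : V →ₗ[ℝ] V) (hJ2 : ∀ X : V, J (J X) = -X)
    (hJg : ∀ X Y : V, ⟪J X, J Y⟫ = ⟪X, Y⟫)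
    (R : V →ₗ[ℝ] V →ₗ[ℝ] V →ₗ[ℝ] V →ₗ[ℝ] ℝ)
    (hR1 : ∀ X Y Z W : V, R X Y Z W = - R Y X Z W)
    (hR2 : ∀ X Y Z W : V, R X Y Z W = - R X Y W Z)
    (hR3 : ∀ X Y Z W : V, R X Y Z W = R Z W X Y)
    (hB : ∀ X Y Z W : V, R X Y Z W + R Y Z X W + R Z X Y W = 0)
    (h : ∀ x y : V, ‖x‖ = 1 → ‖y‖ = 1 → ⟪x, y⟫ = 0 → ⟪x, J y⟫ = 0 →
      R x (J x) (J x) y + R x (J x) (J y) x = 0) :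
    ∀ x y : V, ‖x‖ = 1 → ‖y‖ = 1 → ⟪x, y⟫ = 0 → ⟪x, J y⟫ = 0 →
      R x (J x) (J x) x = R y (J y) (J y) y :=
  holomorphic_sectional_curvature_eq_of_antihol_identity_general J hJ2 hJg R hR1 hR2 hR3 h
end

section
/- Let V be a real inner product space with orthogonal complex structure J, dim V ≥ 6, and R a curvature-type tensor. If H(x) = H(y) for every orthonormal antiholomorphic pair {x,y} (where H(X) = R(X,JX,JX,X)), then H is constant on unit vectors of V. -/
/-!
The conditions `⟪x, z⟫ = ⟪x, J z⟫ = ⟪y, z⟫ = ⟪y, J z⟫ = 0` are four linear conditions on `z`,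
so in dimension at least five they have a common unit solution `z`. The hypothesis applied to
the pairs `{x, z}` and `{y, z}` then gives `H x = H z = H y` for any two unit vectors `x, y`.
-/

open scoped RealInnerProductSpace

open Module

theorem exists_norm_eq_one_forall_eq_zero {V : Type*} [NormedAddCommGroup V] [NormedSpace ℝ V]
    {n : ℕ} (φ : Fin n → V →ₗ[ℝ] ℝ) (hn : n < finrank ℝ V) :
    ∃ z : V, ‖z‖ = 1 ∧ ∀ i, φ i z = 0 := by
  have : FiniteDimensional ℝ V := .of_finrank_pos (by omega)
  have hker : LinearMap.ker (LinearMap.pi φ) ≠ ⊥ :=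
    LinearMap.ker_ne_bot_of_finrank_lt (by simpa using hn)
  obtain ⟨w, hw, hw0⟩ := Submodule.exists_mem_ne_zero_of_ne_bot hker
  refine ⟨‖w‖⁻¹ • w, norm_smul_inv_norm hw0, fun i => ?_⟩
  rw [map_smul, smul_eq_zero]
  exact .inr (congrFun (LinearMap.mem_ker.mp hw) i)

theorem exists_norm_eq_one_inner_eq_zero_inner_map_eq_zero {V : Type*} [NormedAddCommGroup V]
    [InnerProductSpace ℝ V] (hV : 4 < finrank ℝ V) (J : V →ₗ[ℝ] V) (x y : V) :
    ∃ z : V, ‖z‖ = 1 ∧ ⟪x, z⟫ = 0 ∧ ⟪x, J z⟫ = 0 ∧ ⟪y, z⟫ = 0 ∧ ⟪y, J z⟫ = 0 := by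
  obtain ⟨z, hz, hφ⟩ := exists_norm_eq_one_forall_eq_zero
    ![innerₛₗ ℝ x, innerₛₗ ℝ x ∘ₗ J, innerₛₗ ℝ y, innerₛₗ ℝ y ∘ₗ J] hV
  exact ⟨z, hz, by simpa using hφ 0, by simpa using hφ 1, by simpa using hφ 2, by simpa using hφ 3⟩

theorem constant_holomorphic_sectional_curvature_general
    {V : Type*} [NormedAddCommGroup V] [InnerProductSpace ℝ V]
    (hdim : 6 ≤ Module.finrank ℝ V)
    (J : V →ₗ[ℝ] V)
    (R : V →ₗ[ℝ] V →ₗ[ℝ] V →ₗ[ℝ] V →ₗ[ℝ] ℝ)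
    (h : ∀ x y : V, ‖x‖ = 1 → ‖y‖ = 1 → ⟪x, y⟫ = 0 → ⟪x, J y⟫ = 0 →
      R x (J x) (J x) x = R y (J y) (J y) y) :
    ∃ c : ℝ, ∀ x : V, ‖x‖ = 1 → R x (J x) (J x) x = c := by
  have : Nontrivial V := Module.nontrivial_of_finrank_pos (R := ℝ) (by omega)
  obtain ⟨x₀, hx₀⟩ := exists_norm_eq V zero_le_one
  refine ⟨R x₀ (J x₀) (J x₀) x₀, fun x hx => ?_⟩
  obtain ⟨z, hz, hxz, hxJz, hx₀z, hx₀Jz⟩ :=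
    exists_norm_eq_one_inner_eq_zero_inner_map_eq_zero (by omega) J x x₀
  exact (h x z hx hz hxz hxJz).trans (h x₀ z hx₀ hz hx₀z hx₀Jz).symm

/-- If `H(x) = H(y)` for every orthonormal antiholomorphic pair and `dim V ≥ 6`,
then the holomorphic sectional curvature `H(X) = R(X,JX,JX,X)` is constant
on unit vectors. -/
theorem constant_holomorphic_sectional_curvature
    {V : Type*} [NormedAddCommGroup V] [InnerProductSpace ℝ V]
    (hdim : 6 ≤ Module.finrank ℝ V)
    (J : V →ₗ[ℝ] V) (hJ2 : ∀ X : V, J (J X) = -X)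
    (hJg : ∀ X Y : V, ⟪J X, J Y⟫ = ⟪X, Y⟫)
    (R : V →ₗ[ℝ] V →ₗ[ℝ] V →ₗ[ℝ] V →ₗ[ℝ] ℝ)
    (hR1 : ∀ X Y Z W : V, R X Y Z W = - R Y X Z W)
    (hR2 : ∀ X Y Z W : V, R X Y Z W = - R X Y W Z)
    (hR3 : ∀ X Y Z W : V, R X Y Z W = R Z W X Y)
    (hB : ∀ X Y Z W : V, R X Y Z W + R Y Z X W + R Z X Y W = 0)
    (h : ∀ x y : V, ‖x‖ = 1 → ‖y‖ = 1 → ⟪x, y⟫ = 0 → ⟪x, J y⟫ = 0 →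
      R x (J x) (J x) x = R y (J y) (J y) y) :
    ∃ c : ℝ, ∀ x : V, ‖x‖ = 1 → R x (J x) (J x) x = c :=
  constant_holomorphic_sectional_curvature_general hdim J R h
end

section
/- Let V be an indefinite (pseudo-Euclidean) real inner product space with orthogonal complex structure J (J²=−id, ⟨JX,JY⟩=⟨X,Y⟩), and R a curvature-type tensor on V. Suppose R(x,Jx,Jx,a) + R(x,Jx,Ja,x) = 0 for every pair {x,a} with ⟨x,x⟩=1, ⟨a,a⟩=−1, ⟨x,a⟩=⟨x,Ja⟩=0. Then for every such pair H(x) = H(a), where H(X) = R(X,JX,JX,X)/⟨X,X⟩². -/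
/-!
The hyperbolic rotations `x' = c x + s a`, `a' = s x + c a` with `c² - s² = 1` preserve the
hypotheses on the pair `(x, a)`, so the defect `R(x',Jx',Jx',a') + R(x',Jx',Ja',x')` vanishes
along the whole hyperbola. The defect is a quartic form in `(c, s)`; its part odd in `s` is
`2cs (c² p(x,a) + s² p(a,x))`, so both coefficients vanish, and by the symmetries of `R` their
difference is `2 (R(x,Jx,Jx,x) - R(a,Ja,Ja,a))`.
-/

section

variable {V : Type*} [AddCommGroup V] [Module ℝ V]

structure IsAntiholPair (g : V →ₗ[ℝ] V →ₗ[ℝ] ℝ) (J : V →ₗ[ℝ] V) (x a : V) : Prop where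
  apply_fst : g x x = 1
  apply_snd : g a a = -1
  orthogonal : g x a = 0
  orthogonal_J : g x (J a) = 0

def antiholDefect (R : V →ₗ[ℝ] V →ₗ[ℝ] V →ₗ[ℝ] V →ₗ[ℝ] ℝ) (J : V →ₗ[ℝ] V) (x a : V) : ℝ :=
  R x (J x) (J x) a + R x (J x) (J a) x

/-- The coefficient of `c³ s` in `antiholDefect R J (c • x + s • a) (s • x + c • a)`. -/
def antiholDefectCoeff (R : V →ₗ[ℝ] V →ₗ[ℝ] V →ₗ[ℝ] V →ₗ[ℝ] ℝ) (J : V →ₗ[ℝ] V) (x a : V) : ℝ :=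
  2 * R x (J x) (J x) x + 2 * R x (J x) (J a) a + R a (J x) (J x) a + R x (J a) (J x) a
    + R a (J x) (J a) x + R x (J a) (J a) x

theorem apply_J_eq_neg_apply_J {g : V →ₗ[ℝ] V →ₗ[ℝ] ℝ} {J : V →ₗ[ℝ] V}
    (hgsym : ∀ X Y : V, g X Y = g Y X) (hJ2 : ∀ X : V, J (J X) = -X)
    (hJg : ∀ X Y : V, g (J X) (J Y) = g X Y) (X Y : V) :
    g X (J Y) = - g Y (J X) := by
  rw [← hJg X (J Y), hJ2, map_neg, hgsym]

theorem apply_self_J_eq_zero {g : V →ₗ[ℝ] V →ₗ[ℝ] ℝ} {J : V →ₗ[ℝ] V}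
    (hgsym : ∀ X Y : V, g X Y = g Y X) (hJ2 : ∀ X : V, J (J X) = -X)
    (hJg : ∀ X Y : V, g (J X) (J Y) = g X Y) (X : V) :
    g X (J X) = 0 := by
  linarith [apply_J_eq_neg_apply_J hgsym hJ2 hJg X X]

theorem IsAntiholPair.hyperbolicRotation {g : V →ₗ[ℝ] V →ₗ[ℝ] ℝ} {J : V →ₗ[ℝ] V} {x a : V}
    (hgsym : ∀ X Y : V, g X Y = g Y X) (hJ2 : ∀ X : V, J (J X) = -X)
    (hJg : ∀ X Y : V, g (J X) (J Y) = g X Y) (hp : IsAntiholPair g J x a)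
    {c s : ℝ} (hcs : c ^ 2 - s ^ 2 = 1) :
    IsAntiholPair g J (c • x + s • a) (s • x + c • a) := by
  have hax : g a x = 0 := by rw [hgsym]; exact hp.orthogonal
  have haJx : g a (J x) = 0 := by
    rw [apply_J_eq_neg_apply_J hgsym hJ2 hJg, hp.orthogonal_J, neg_zero]
  have hxJx := apply_self_J_eq_zero hgsym hJ2 hJg x
  have haJa := apply_self_J_eq_zero hgsym hJ2 hJg a
  constructor <;>
    simp only [map_add, map_smul, LinearMap.add_apply, LinearMap.smul_apply, smul_eq_mul,
      hp.apply_fst, hp.apply_snd, hp.orthogonal, hp.orthogonal_J, hax, haJx, hxJx, haJa]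
  · linear_combination hcs
  · linear_combination -hcs
  · ring
  · ring

theorem antiholDefect_hyperbolicRotation_sub (R : V →ₗ[ℝ] V →ₗ[ℝ] V →ₗ[ℝ] V →ₗ[ℝ] ℝ)
    (J : V →ₗ[ℝ] V) (x a : V) (c s : ℝ) :
    antiholDefect R J (c • x + s • a) (s • x + c • a)
        - antiholDefect R J (c • x + (-s) • a) ((-s) • x + c • a)
      = 2 * c * s * (c ^ 2 * antiholDefectCoeff R J x a + s ^ 2 * antiholDefectCoeff R J a x) := by
  simp only [antiholDefect, antiholDefectCoeff, map_add, map_smul, LinearMap.add_apply,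
    LinearMap.smul_apply, smul_eq_mul]
  ring

theorem antiholDefectCoeff_sub_swap {R : V →ₗ[ℝ] V →ₗ[ℝ] V →ₗ[ℝ] V →ₗ[ℝ] ℝ}
    (hR1 : ∀ X Y Z W : V, R X Y Z W = - R Y X Z W)
    (hR2 : ∀ X Y Z W : V, R X Y Z W = - R X Y W Z)
    (hR3 : ∀ X Y Z W : V, R X Y Z W = R Z W X Y) (J : V →ₗ[ℝ] V) (x a : V) :
    antiholDefectCoeff R J x a - antiholDefectCoeff R J a x
      = 2 * (R x (J x) (J x) x - R a (J a) (J a) a) := by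
  have hpair : R x (J x) (J a) a = R a (J a) (J x) x := by
    rw [hR3, hR1, hR2, neg_neg]
  simp only [antiholDefectCoeff]
  linear_combination 2 * hpair

end

theorem eq_zero_of_forall_hyperbola {p q : ℝ}
    (h : ∀ c s : ℝ, c ^ 2 - s ^ 2 = 1 → 2 * c * s * (c ^ 2 * p + s ^ 2 * q) = 0) :
    p = 0 ∧ q = 0 := by
  have h₁ := h (5 / 4) (3 / 4) (by norm_num)
  have h₂ := h (5 / 3) (4 / 3) (by norm_num)
  constructor <;> linarith

theorem indefinite_antihol_pair_holomorphic_eq_general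
    {V : Type*} [AddCommGroup V] [Module ℝ V]
    (g : V →ₗ[ℝ] V →ₗ[ℝ] ℝ)
    (hgsym : ∀ X Y : V, g X Y = g Y X)
    (J : V →ₗ[ℝ] V) (hJ2 : ∀ X : V, J (J X) = -X)
    (hJg : ∀ X Y : V, g (J X) (J Y) = g X Y)
    (R : V →ₗ[ℝ] V →ₗ[ℝ] V →ₗ[ℝ] V →ₗ[ℝ] ℝ)
    (hR1 : ∀ X Y Z W : V, R X Y Z W = - R Y X Z W)
    (hR2 : ∀ X Y Z W : V, R X Y Z W = - R X Y W Z)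
    (hR3 : ∀ X Y Z W : V, R X Y Z W = R Z W X Y)
    (h : ∀ x a : V, g x x = 1 → g a a = -1 → g x a = 0 → g x (J a) = 0 →
      R x (J x) (J x) a + R x (J x) (J a) x = 0) :
    ∀ x a : V, g x x = 1 → g a a = -1 → g x a = 0 → g x (J a) = 0 →
      R x (J x) (J x) x / (g x x) ^ 2 = R a (J a) (J a) a / (g a a) ^ 2 := by
  intro x a hx ha hxa hxJa
  have hp : IsAntiholPair g J x a := ⟨hx, ha, hxa, hxJa⟩
  have hdefect : ∀ {c s : ℝ}, c ^ 2 - s ^ 2 = 1 →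
      antiholDefect R J (c • x + s • a) (s • x + c • a) = 0 := fun hcs => by
    obtain ⟨h₁, h₂, h₃, h₄⟩ := hp.hyperbolicRotation hgsym hJ2 hJg hcs
    exact h _ _ h₁ h₂ h₃ h₄
  obtain ⟨hcoeff, hcoeff_swap⟩ := eq_zero_of_forall_hyperbola
    (p := antiholDefectCoeff R J x a) (q := antiholDefectCoeff R J a x) fun c s hcs => by
    rw [← antiholDefect_hyperbolicRotation_sub, hdefect hcs, hdefect (by linear_combination hcs),
      sub_zero]
  have hH : R x (J x) (J x) x = R a (J a) (J a) a := by
    linear_combination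
      (1 / 2 : ℝ) * (hcoeff - hcoeff_swap - antiholDefectCoeff_sub_swap hR1 hR2 hR3 J x a)
  rw [hx, ha, hH]
  norm_num

/-- Lemma 1 (core): on a pseudo-Euclidean space with orthogonal complex structure,
if `R(x,Jx,Jx,a) + R(x,Jx,Ja,x) = 0` for every antiholomorphic pair of signature
`(+,−)`, then `H(x) = H(a)` for every such pair, where `H(X) = R(X,JX,JX,X)/g(X,X)²`. -/
theorem indefinite_antihol_pair_holomorphic_eq
    {V : Type*} [AddCommGroup V] [Module ℝ V]
    (g : V →ₗ[ℝ] V →ₗ[ℝ] ℝ)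
    (hgsym : ∀ X Y : V, g X Y = g Y X)
    (hgnondeg : ∀ X : V, (∀ Y : V, g X Y = 0) → X = 0)
    (J : V →ₗ[ℝ] V) (hJ2 : ∀ X : V, J (J X) = -X)
    (hJg : ∀ X Y : V, g (J X) (J Y) = g X Y)
    (R : V →ₗ[ℝ] V →ₗ[ℝ] V →ₗ[ℝ] V →ₗ[ℝ] ℝ)
    (hR1 : ∀ X Y Z W : V, R X Y Z W = - R Y X Z W)
    (hR2 : ∀ X Y Z W : V, R X Y Z W = - R X Y W Z)
    (hR3 : ∀ X Y Z W : V, R X Y Z W = R Z W X Y)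
    (hB : ∀ X Y Z W : V, R X Y Z W + R Y Z X W + R Z X Y W = 0)
    (h : ∀ x a : V, g x x = 1 → g a a = -1 → g x a = 0 → g x (J a) = 0 →
      R x (J x) (J x) a + R x (J x) (J a) x = 0) :
    ∀ x a : V, g x x = 1 → g a a = -1 → g x a = 0 → g x (J a) = 0 →
      R x (J x) (J x) x / (g x x) ^ 2 = R a (J a) (J a) a / (g a a) ^ 2 :=
  indefinite_antihol_pair_holomorphic_eq_general g hgsym J hJ2 hJg R hR1 hR2 hR3 h
end

section
/- Let V be a pseudo-Euclidean space with orthogonal complex structure J and R a curvature-type tensor. Let {x,a} be antiholomorphic with ⟨x,x⟩=1, ⟨a,a⟩=−1, ⟨x,a⟩=⟨x,Ja⟩=0, and let c ≥ 0. If |R(x+ta, J(x+ta), J(x+ta), x+ta)| ≤ c(1−t²)² for all t with |t|<1 (this is the bound |H((x+ta)/√(1−t²))| ≤ c expressed for the normalized vector), then R(x,Jx,Jx,a) + R(x,Jx,Ja,x) = 0. -/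
open Filter Set Topology

set_option maxHeartbeats 1000000 in
/-- Theorem 1 (main step): if the unnormalized holomorphic sectional curvature along
`x + t a` satisfies `|R(x+ta, J(x+ta), J(x+ta), x+ta)| ≤ c (1−t²)²` for `|t| < 1`,
then `R(x,Jx,Jx,a) + R(x,Jx,Ja,x) = 0`. -/
theorem bounded_holomorphic_curvature_vanishing
    {V : Type*} [AddCommGroup V] [Module ℝ V]
    (g : V →ₗ[ℝ] V →ₗ[ℝ] ℝ)
    (hgsym : ∀ X Y : V, g X Y = g Y X)
    (hgnondeg : ∀ X : V, (∀ Y : V, g X Y = 0) → X = 0)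
    (J : V →ₗ[ℝ] V) (hJ2 : ∀ X : V, J (J X) = -X)
    (hJg : ∀ X Y : V, g (J X) (J Y) = g X Y)
    (R : V →ₗ[ℝ] V →ₗ[ℝ] V →ₗ[ℝ] V →ₗ[ℝ] ℝ)
    (hR1 : ∀ X Y Z W : V, R X Y Z W = - R Y X Z W)
    (hR2 : ∀ X Y Z W : V, R X Y Z W = - R X Y W Z)
    (hR3 : ∀ X Y Z W : V, R X Y Z W = R Z W X Y)
    (hB : ∀ X Y Z W : V, R X Y Z W + R Y Z X W + R Z X Y W = 0)
    (x a : V) (hx : g x x = 1) (ha : g a a = -1)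
    (hxa : g x a = 0) (hxJa : g x (J a) = 0)
    (c : ℝ) (hc : 0 ≤ c)
    (h : ∀ t : ℝ, |t| < 1 →
      |R (x + t • a) (J (x + t • a)) (J (x + t • a)) (x + t • a)| ≤ c * (1 - t ^ 2) ^ 2) :
    R x (J x) (J x) a + R x (J x) (J a) x = 0 := by
  -- coefficients of the polynomial p(t)
  set L : ℝ := R x (J x) (J x) a + R x (J x) (J a) x with hL
  set M : ℝ := R a (J a) (J a) x + R a (J x) (J a) a with hM
  set p0 : ℝ := R x (J x) (J x) x with hp0
  set p2 : ℝ := R a (J x) (J x) a + R a (J x) (J a) x + R a (J a) (J x) x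
      + R x (J a) (J x) a + R x (J a) (J a) x + R x (J x) (J a) a with hp2
  set p4 : ℝ := R a (J a) (J a) a with hp4
  have h1 : R a (J x) (J x) x = R x (J x) (J x) a := by
    rw [hR3 a (J x) (J x) x, hR1 (J x) x a (J x), hR2 x (J x) a (J x)]; ring
  have h2 : R x (J a) (J x) x = R x (J x) (J a) x := by
    rw [hR3 x (J a) (J x) x, hR1 (J x) x x (J a), hR2 x (J x) x (J a)]; ring
  have h3 : R a (J a) (J x) a = R a (J x) (J a) a := by
    rw [hR3 a (J a) (J x) a, hR1 (J x) a a (J a), hR2 a (J x) a (J a)]; ring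
  have h4 : R x (J a) (J a) a = R a (J a) (J a) x := by
    rw [hR3 x (J a) (J a) a, hR1 (J a) a x (J a), hR2 a (J a) x (J a)]; ring
  have expand : ∀ t : ℝ, R (x + t • a) (J (x + t • a)) (J (x + t • a)) (x + t • a)
      = p0 + 2*L*t + p2*t^2 + 2*M*t^3 + p4*t^4 := by
    intro t
    have hJt : J (x + t • a) = J x + t • J a := by simp
    rw [hJt]
    simp only [map_add, map_smul, LinearMap.add_apply, LinearMap.smul_apply, smul_eq_mul,
      hL, hM, hp0, hp2, hp4]
    linear_combination t * h1 + t * h2 + t^3 * h3 + t^3 * h4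
  -- odd part bound
  have hodd : ∀ t : ℝ, |t| < 1 → |L * t + M * t^3| ≤ c * (1 - t^2)^2 := by
    intro t ht
    have ha1 := h t ht
    have ha2 := h (-t) (by rwa [abs_neg])
    rw [expand t] at ha1
    rw [expand (-t)] at ha2
    have e : L * t + M * t^3 =
        ((p0 + 2*L*t + p2*t^2 + 2*M*t^3 + p4*t^4)
          - (p0 + 2*L*(-t) + p2*(-t)^2 + 2*M*(-t)^3 + p4*(-t)^4)) / 4 := by ring
    rw [e, abs_div]
    have htr := abs_sub (p0 + 2*L*t + p2*t^2 + 2*M*t^3 + p4*t^4)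
      (p0 + 2*L*(-t) + p2*(-t)^2 + 2*M*(-t)^3 + p4*(-t)^4)
    have hsq : (1 - (-t)^2)^2 = (1 - t^2)^2 := by ring
    rw [hsq] at ha2
    have hnn : (0:ℝ) ≤ c * (1 - t^2)^2 := by positivity
    rw [abs_of_nonneg (by norm_num : (0:ℝ) ≤ 4)]
    linarith
  have hev : ∀ᶠ t in 𝓝[<] (1:ℝ), |L * t + M * t^3| ≤ c * (1 - t^2)^2 := by
    filter_upwards [Ioo_mem_nhdsLT_of_mem (show (1:ℝ) ∈ Set.Ioc (-1:ℝ) 1 by norm_num)]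
      with t ht
    exact hodd t (abs_lt.mpr ⟨ht.1, ht.2⟩)
  have tA : Tendsto (fun t : ℝ => |L * t + M * t^3|) (𝓝[<] (1:ℝ)) (𝓝 |L + M|) := by
    have hcont : Continuous fun t : ℝ => |L * t + M * t^3| :=
      (by fun_prop : Continuous fun t : ℝ => L * t + M * t^3).abs
    have := (hcont.tendsto 1).mono_left (nhdsWithin_le_nhds (s := Set.Iio 1))
    simpa using this
  have tB : Tendsto (fun t : ℝ => c * (1 - t^2)^2) (𝓝[<] (1:ℝ)) (𝓝 0) := by
    have hcont : Continuous fun t : ℝ => c * (1 - t^2)^2 := by fun_prop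
    have := (hcont.tendsto 1).mono_left (nhdsWithin_le_nhds (s := Set.Iio 1))
    simpa using this
  have hLM : |L + M| ≤ 0 := le_of_tendsto_of_tendsto tA tB hev
  have hMeq : M = -L := by
    have := abs_nonneg (L + M)
    have : L + M = 0 := abs_eq_zero.mp (le_antisymm hLM (abs_nonneg _))
    linarith
  -- now |L| ≤ c (1 - t²)/t on (0,1)
  have hev2 : ∀ᶠ t in 𝓝[<] (1:ℝ), |L| ≤ c * (1 - t^2) / t := by
    filter_upwards [Ioo_mem_nhdsLT_of_mem (show (1:ℝ) ∈ Set.Ioc (0:ℝ) 1 by norm_num)]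
      with t ht
    have ht0 : 0 < t := ht.1
    have ht1 : t < 1 := ht.2
    have hb := hodd t (abs_lt.mpr ⟨by linarith, ht1⟩)
    rw [hMeq] at hb
    have hfac : L * t + -L * t^3 = L * (t * (1 - t^2)) := by ring
    rw [hfac, abs_mul] at hb
    have hpos : 0 < t * (1 - t^2) := by nlinarith
    rw [abs_of_pos hpos] at hb
    rw [le_div_iff₀ ht0]
    nlinarith [abs_nonneg L]
  have tC : Tendsto (fun t : ℝ => c * (1 - t^2) / t) (𝓝[<] (1:ℝ)) (𝓝 0) := by
    have hcont : ContinuousAt (fun t : ℝ => c * (1 - t^2) / t) 1 := by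
      apply ContinuousAt.div
      · fun_prop
      · fun_prop
      · norm_num
    have := hcont.tendsto.mono_left (nhdsWithin_le_nhds (s := Set.Iio 1))
    simpa using this
  have hL0 : |L| ≤ 0 :=
    le_of_tendsto_of_tendsto tendsto_const_nhds tC hev2
  have : L = 0 := abs_eq_zero.mp (le_antisymm hL0 (abs_nonneg _))
  simpa [hL] using this
end

section
/- Let V be a real inner product space with orthogonal complex structure J, and R a curvature-type tensor. Let {x,y} be an orthonormal antiholomorphic pair and suppose both: (i) H(x) = H(y), and (ii) 2H(x) = K(x,Jy) + 2R(x,Jx,Jy,y) + 2R(x,Jy,Jx,y) + K(Jx,y), where H(X)=R(X,JX,JX,X), K(X,Y)=R(X,Y,Y,X). If these identities hold for all orthonormal antiholomorphic pairs obtained from {x,y} by rotation {(x+ty)/√(1+t²), (tx−y)/√(1+t²)} (all t ∈ ℝ), then R(x,Jx,Jx,y) + R(x,Jx,Jy,x) = 0. -/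
open scoped RealInnerProductSpace

/-!
Both identities are homogeneous of degree four, so they may be tested on the unnormalised
pairs `u = x + t y`, `v = t x - y`; the second one then says that a quartic polynomial in `t`
vanishes identically. Its coefficients of `t` and `t³` are `10a - 6b` and `10b - 6a`, where
`a = R(x,Jx,Jx,y) + R(x,Jx,Jy,x)` and `b = R(x,Jy,Jy,y) + R(y,Jy,Jx,y)`; hence
`5a = 3b` and `3a = 5b`, which forces `a = 0`.
-/

section PairDefect

variable {𝕜 M : Type*} [CommRing 𝕜] [AddCommGroup M] [Module 𝕜 M]
  (R : M →ₗ[𝕜] M →ₗ[𝕜] M →ₗ[𝕜] M →ₗ[𝕜] 𝕜) (J : M →ₗ[𝕜] M)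

/-- The defect of identity (ii) for the pair `(u, v)`. -/
def pairDefect (u v : M) : 𝕜 :=
  2 * R u (J u) (J u) u -
    (R u (J v) (J v) u + 2 * R u (J u) (J v) v + 2 * R u (J v) (J u) v + R (J u) v v (J u))

theorem pairDefect_smul (c : 𝕜) (u v : M) :
    pairDefect R J (c • u) (c • v) = c ^ 4 * pairDefect R J u v := by
  simp only [pairDefect, map_smul, LinearMap.smul_apply, smul_eq_mul]
  ring

theorem pairDefect_rotated_sub_neg (hswap : ∀ X Y Z W : M, R X Y Z W = R Z W X Y)
    (hrev : ∀ X Y Z W : M, R X Y Z W = R W Z Y X) (x y : M) (t : 𝕜) :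
    pairDefect R J (x + t • y) (t • x - y) - pairDefect R J (x + (-t) • y) ((-t) • x - y) =
      2 * ((10 * (R x (J x) (J x) y + R x (J x) (J y) x)
              - 6 * (R x (J y) (J y) y + R y (J y) (J x) y)) * t
        + (10 * (R x (J y) (J y) y + R y (J y) (J x) y)
              - 6 * (R x (J x) (J x) y + R x (J x) (J y) x)) * t ^ 3) := by
  -- `map_sub` does not fire on the outer arguments of `R` (instance search on the iterated
  -- spaces of linear maps fails), hence `t • x + (-1) • y`. After `hswap` every term has the
  -- shape `R e f f e`, whose only remaining symmetry is `hrev`.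
  simp only [pairDefect, hswap (J (x + _ • y)), sub_eq_add_neg (_ • x), ← neg_one_smul 𝕜 y]
  simp only [map_add, map_smul, LinearMap.add_apply, LinearMap.smul_apply, smul_eq_mul,
    hrev y (J x) (J x) x, hrev x (J y) (J x) x, hrev y (J y) (J y) x,
    hrev y (J x) (J y) y, hrev y (J y) (J x) x, hrev y (J x) (J y) x]
  ring

end PairDefect

theorem eq_zero_of_odd_cubic_eq_zero {c₁ c₃ : ℝ} (h : ∀ t : ℝ, c₁ * t + c₃ * t ^ 3 = 0) :
    c₁ = 0 ∧ c₃ = 0 := by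
  have h1 := h 1
  have h2 := h 2
  norm_num at h1 h2
  constructor <;> linarith

theorem rotated_pairs_identities_imp_vanish_general
    {V : Type*} [NormedAddCommGroup V] [InnerProductSpace ℝ V]
    (J : V →ₗ[ℝ] V)
    (R : V →ₗ[ℝ] V →ₗ[ℝ] V →ₗ[ℝ] V →ₗ[ℝ] ℝ)
    (hR1 : ∀ X Y Z W : V, R X Y Z W = - R Y X Z W)
    (hR2 : ∀ X Y Z W : V, R X Y Z W = - R X Y W Z)
    (hR3 : ∀ X Y Z W : V, R X Y Z W = R Z W X Y)
    (x y : V)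
    (h1 : ∀ t : ℝ,
      ∀ u v : V, u = (Real.sqrt (1 + t ^ 2))⁻¹ • (x + t • y) →
        v = (Real.sqrt (1 + t ^ 2))⁻¹ • (t • x - y) →
        R u (J u) (J u) u = R v (J v) (J v) v ∧
        2 * R u (J u) (J u) u =
          R u (J v) (J v) u + 2 * R u (J u) (J v) v + 2 * R u (J v) (J u) v +
            R (J u) v v (J u)) :
    R x (J x) (J x) y + R x (J x) (J y) x = 0 := by
  have hrev : ∀ X Y Z W : V, R X Y Z W = R W Z Y X := fun X Y Z W => by
    rw [hR3, hR1, hR2, neg_neg]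
  have hdefect : ∀ t : ℝ, pairDefect R J (x + t • y) (t • x - y) = 0 := by
    intro t
    have hc : (Real.sqrt (1 + t ^ 2))⁻¹ ≠ 0 := by positivity
    have hscaled := sub_eq_zero_of_eq (h1 t _ _ rfl rfl).2
    rw [← pairDefect, pairDefect_smul] at hscaled
    exact (mul_eq_zero.1 hscaled).resolve_left (pow_ne_zero 4 hc)
  obtain ⟨h5a3b, h5b3a⟩ := eq_zero_of_odd_cubic_eq_zero
    (c₁ := 10 * (R x (J x) (J x) y + R x (J x) (J y) x)
      - 6 * (R x (J y) (J y) y + R y (J y) (J x) y))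
    (c₃ := 10 * (R x (J y) (J y) y + R y (J y) (J x) y)
      - 6 * (R x (J x) (J x) y + R x (J x) (J y) x))
    fun t => by
      linarith [pairDefect_rotated_sub_neg R J hR3 hrev x y t, hdefect t, hdefect (-t)]
  linarith

/-- The `m = 2` case in Theorem 5: if the identities `H(u) = H(v)` and
`2H(u) = K(u,Jv) + 2R(u,Ju,Jv,v) + 2R(u,Jv,Ju,v) + K(Ju,v)` hold for all
rotated pairs `u = (x+ty)/√(1+t²)`, `v = (tx−y)/√(1+t²)` of an orthonormal
antiholomorphic pair `{x,y}`, then `R(x,Jx,Jx,y) + R(x,Jx,Jy,x) = 0`. -/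
theorem rotated_pairs_identities_imp_vanish
    {V : Type*} [NormedAddCommGroup V] [InnerProductSpace ℝ V]
    (J : V →ₗ[ℝ] V) (hJ2 : ∀ X : V, J (J X) = -X)
    (hJg : ∀ X Y : V, ⟪J X, J Y⟫ = ⟪X, Y⟫)
    (R : V →ₗ[ℝ] V →ₗ[ℝ] V →ₗ[ℝ] V →ₗ[ℝ] ℝ)
    (hR1 : ∀ X Y Z W : V, R X Y Z W = - R Y X Z W)
    (hR2 : ∀ X Y Z W : V, R X Y Z W = - R X Y W Z)
    (hR3 : ∀ X Y Z W : V, R X Y Z W = R Z W X Y)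
    (hB : ∀ X Y Z W : V, R X Y Z W + R Y Z X W + R Z X Y W = 0)
    (x y : V) (hx : ‖x‖ = 1) (hy : ‖y‖ = 1) (hxy : ⟪x, y⟫ = 0) (hxJy : ⟪x, J y⟫ = 0)
    (h1 : ∀ t : ℝ,
      ∀ u v : V, u = (Real.sqrt (1 + t ^ 2))⁻¹ • (x + t • y) →
        v = (Real.sqrt (1 + t ^ 2))⁻¹ • (t • x - y) →
        R u (J u) (J u) u = R v (J v) (J v) v ∧
        2 * R u (J u) (J u) u =
          R u (J v) (J v) u + 2 * R u (J u) (J v) v + 2 * R u (J v) (J u) v +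
            R (J u) v v (J u)) :
    R x (J x) (J x) y + R x (J x) (J y) x = 0 :=
  rotated_pairs_identities_imp_vanish_general J R hR1 hR2 hR3 x y h1
end
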